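/- Suppose α > 1, δ ∈ (0,1) with α(1-δ) > 1, and c₁ ≥ α/(α(1-δ) - 1), c₂ ≥ 0. Then for all real n, n_o, n_e ≥ 0 with n_e ≥ (1-δ)·n and n_e ≥ n_o, n + c₁(1/α)n + c₁(1-1/α)n_o + c₂n_o − c₁(n_e − n_o) ≤ (c₁(2 - 1/α) + c₂)·n_o. -/

import Mathlib

/-! Everything except the `n` and `n_e` terms cancels, so the claim is `(1 + c₁/α) n ≤ c₁ n_e`.
Since `c₁ n_e ≥ c₁ (1-δ) n`, it suffices that `1 + c₁/α ≤ c₁ (1-δ)`, which after clearing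
denominators is exactly the assumption `c₁ ≥ α / (α(1-δ) - 1)`. -/

lemma one_add_div_le_mul_of_div_le {a b c : ℝ} (ha : 0 < a) (hab : 1 < a * b)
    (hc : a / (a * b - 1) ≤ c) : 1 + c / a ≤ c * b := by
  rw [div_le_iff₀ (by linarith)] at hc
  rw [one_add_div ha.ne', div_le_iff₀ ha]
  linarith

theorem stmt_15_general (α δ c₁ c₂ : ℝ) (hα : 1 < α)
    (h : 1 < α * (1 - δ)) (hc₁ : c₁ ≥ α / (α * (1 - δ) - 1)) :
    ∀ n n_o n_e : ℝ, 0 ≤ n → 0 ≤ n_o → 0 ≤ n_e → (1 - δ) * n ≤ n_e → n_o ≤ n_e →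
      n + c₁ * (1/α) * n + c₁ * (1 - 1/α) * n_o + c₂ * n_o - c₁ * (n_e - n_o)
        ≤ (c₁ * (2 - 1/α) + c₂) * n_o := by
  intro n n_o n_e hn _ _ hne _
  have hα₀ : 0 < α := by linarith
  have hcoef : 1 + c₁ / α ≤ c₁ * (1 - δ) := one_add_div_le_mul_of_div_le hα₀ h hc₁
  have hc₁₀ : 0 ≤ c₁ := (div_pos hα₀ (by linarith)).le.trans hc₁
  calc n + c₁ * (1/α) * n + c₁ * (1 - 1/α) * n_o + c₂ * n_o - c₁ * (n_e - n_o)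
      = (1 + c₁ / α) * n - c₁ * n_e + (c₁ * (2 - 1/α) + c₂) * n_o := by ring
    _ ≤ c₁ * (1 - δ) * n - c₁ * ((1 - δ) * n) + (c₁ * (2 - 1/α) + c₂) * n_o := by gcongr
    _ = (c₁ * (2 - 1/α) + c₂) * n_o := by ring

theorem stmt_15 (α δ c₁ c₂ : ℝ) (hα : 1 < α) (hδ0 : 0 < δ) (hδ1 : δ < 1)
    (h : 1 < α * (1 - δ)) (hc₁ : c₁ ≥ α / (α * (1 - δ) - 1)) (hc₂ : 0 ≤ c₂) :
    ∀ n n_o n_e : ℝ, 0 ≤ n → 0 ≤ n_o → 0 ≤ n_e → (1 - δ) * n ≤ n_e → n_o ≤ n_e →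
      n + c₁ * (1/α) * n + c₁ * (1 - 1/α) * n_o + c₂ * n_o - c₁ * (n_e - n_o)
        ≤ (c₁ * (2 - 1/α) + c₂) * n_o :=
  stmt_15_general α δ c₁ c₂ hα h hc₁
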